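/- arXiv:2602.09314 — 3 statements merged into one kernel-verified Lean document; each statement's English description precedes it below -/
import Mathlib

section
/- Let g be an ℝ^d-valued random vector on a probability space with E[g] = ∇L, and assume that for every coordinate i, P(g_i = 0) = 0 and ∇L_i ≠ 0. Then the function γ ↦ E[‖γ ⊙ sign(g) − sign(∇L)‖_2^2] over γ ∈ ℝ^d attains its unique minimum at γ_i = 2·P(sign(g_i) = sign(∇L_i)) − 1 for all i. -/
open MeasureTheory

/-- **Optimal adaptation of the sign of a stochastic gradient (Lemma 1 of Balles & Hennig,
second part).**  Let `g` be an `ℝ^d`-valued random vector with `E[g] = ∇L`, `P(g_i = 0) = 0`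
and `∇L_i ≠ 0` for every coordinate `i`.  Then `γ ↦ E[‖γ ⊙ sign(g) − sign(∇L)‖₂²]` attains its
unique minimum at `γ_i = 2·P(sign(g_i) = sign(∇L_i)) − 1`. -/
theorem statement1 {Ω : Type*} [MeasurableSpace Ω] (μ : Measure Ω) [IsProbabilityMeasure μ]
    {d : ℕ} (g : Ω → Fin d → ℝ) (gradL : Fin d → ℝ)
    (hmeas : ∀ i, Measurable fun ω => g ω i)
    (hg1 : ∀ i, Integrable (fun ω => g ω i) μ)
    (hmean : ∀ i, ∫ ω, g ω i ∂μ = gradL i)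
    (hzero : ∀ i, μ {ω | g ω i = 0} = 0)
    (hL : ∀ i, gradL i ≠ 0)
    (γstar : Fin d → ℝ)
    (hγstar : ∀ i,
      γstar i = 2 * (μ {ω | Real.sign (g ω i) = Real.sign (gradL i)}).toReal - 1) :
    (∀ γ : Fin d → ℝ,
        ∫ ω, ∑ i, (γstar i * Real.sign (g ω i) - Real.sign (gradL i)) ^ 2 ∂μ ≤
          ∫ ω, ∑ i, (γ i * Real.sign (g ω i) - Real.sign (gradL i)) ^ 2 ∂μ) ∧
    (∀ γ : Fin d → ℝ, γ ≠ γstar →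
        ∫ ω, ∑ i, (γstar i * Real.sign (g ω i) - Real.sign (gradL i)) ^ 2 ∂μ <
          ∫ ω, ∑ i, (γ i * Real.sign (g ω i) - Real.sign (gradL i)) ^ 2 ∂μ) := by
  -- notation
  set t : Fin d → ℝ := fun i => Real.sign (gradL i) with ht
  set A : Fin d → Set Ω := fun i => {ω | Real.sign (g ω i) = t i} with hA
  have msign : ∀ i, Measurable fun ω => Real.sign (g ω i) := by
    intro i
    have : (fun ω => Real.sign (g ω i)) =
        fun ω => if g ω i < 0 then (-1 : ℝ) else if 0 < g ω i then 1 else 0 := rfl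
    rw [this]
    exact Measurable.ite (measurableSet_lt (hmeas i) measurable_const) measurable_const
      (Measurable.ite (measurableSet_lt measurable_const (hmeas i)) measurable_const
        measurable_const)
  have hAm : ∀ i, MeasurableSet (A i) := fun i =>
    (msign i) (measurableSet_singleton (t i))
  have hne : ∀ i, ∀ᵐ ω ∂μ, g ω i ≠ 0 := by
    intro i
    have : MeasurableSet {ω | g ω i = 0} := (hmeas i) (measurableSet_singleton 0)
    exact (ae_iff.2 (by simpa using hzero i))
  have ht1 : ∀ i, t i = 1 ∨ t i = -1 := by
    intro i
    rcases lt_or_gt_of_ne (hL i) with h | h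
    · exact Or.inr (Real.sign_of_neg h)
    · exact Or.inl (Real.sign_of_pos h)
  -- pointwise a.e. identity
  have hptw : ∀ (i : Fin d) (c : ℝ), ∀ᵐ ω ∂μ,
      (c * Real.sign (g ω i) - t i) ^ 2 =
        (A i).indicator (fun _ => (c - 1) ^ 2 - (c + 1) ^ 2) ω + (c + 1) ^ 2 := by
    intro i c
    filter_upwards [hne i] with ω hω
    have hs : Real.sign (g ω i) = 1 ∨ Real.sign (g ω i) = -1 := by
      rcases lt_or_gt_of_ne hω with h | h
      · exact Or.inr (Real.sign_of_neg h)
      · exact Or.inl (Real.sign_of_pos h)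
    by_cases hin : ω ∈ A i
    · have : Real.sign (g ω i) = t i := hin
      rw [Set.indicator_of_mem hin, this]
      rcases ht1 i with h | h <;> rw [h] <;> ring
    · have hst : Real.sign (g ω i) = -(t i) := by
        rcases hs with h | h <;> rcases ht1 i with h' | h'
        · exact absurd (h.trans h'.symm) hin
        · simp [h, h']
        · simp [h, h']
        · exact absurd (h.trans h'.symm) hin
      rw [Set.indicator_of_notMem hin, hst]
      rcases ht1 i with h | h <;> rw [h] <;> ring
  -- integrability
  have hint : ∀ (i : Fin d) (c : ℝ),
      Integrable (fun ω => (c * Real.sign (g ω i) - t i) ^ 2) μ := by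
    intro i c
    refine Integrable.congr ?_ (Filter.EventuallyEq.symm (hptw i c))
    exact ((integrable_const _).indicator (hAm i)).add (integrable_const _)
  -- the value of each coordinate integral
  have hval : ∀ (i : Fin d) (c : ℝ),
      ∫ ω, (c * Real.sign (g ω i) - t i) ^ 2 ∂μ = c ^ 2 - 2 * c * γstar i + 1 := by
    intro i c
    rw [integral_congr_ae (hptw i c), integral_add (((integrable_const _).indicator (hAm i)))
      (integrable_const _), integral_indicator_const _ (hAm i), integral_const]
    have hp : γstar i = 2 * (μ (A i)).toReal - 1 := hγstar i
    have hμ : (μ Set.univ).toReal = 1 := by simp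
    simp only [smul_eq_mul, measureReal_def, hμ, one_smul]
    rw [hp]; ring
  -- sum integral
  have hsum : ∀ γ : Fin d → ℝ,
      ∫ ω, ∑ i, (γ i * Real.sign (g ω i) - t i) ^ 2 ∂μ =
        ∑ i, ((γ i) ^ 2 - 2 * γ i * γstar i + 1) := by
    intro γ
    rw [integral_finset_sum _ (fun i _ => hint i (γ i))]
    exact Finset.sum_congr rfl fun i _ => hval i (γ i)
  have key : ∀ γ : Fin d → ℝ,
      ∫ ω, ∑ i, (γ i * Real.sign (g ω i) - t i) ^ 2 ∂μ -
        ∫ ω, ∑ i, (γstar i * Real.sign (g ω i) - t i) ^ 2 ∂μ =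
        ∑ i, (γ i - γstar i) ^ 2 := by
    intro γ
    rw [hsum γ, hsum γstar, ← Finset.sum_sub_distrib]
    exact Finset.sum_congr rfl fun i _ => by ring
  constructor
  · intro γ
    have := key γ
    have hnn : (0:ℝ) ≤ ∑ i, (γ i - γstar i) ^ 2 :=
      Finset.sum_nonneg fun i _ => sq_nonneg _
    linarith
  · intro γ hγ
    have := key γ
    have hpos : (0:ℝ) < ∑ i, (γ i - γstar i) ^ 2 := by
      obtain ⟨j, hj⟩ : ∃ j, γ j ≠ γstar j := by
        by_contra h; push_neg at h; exact hγ (funext h)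
      exact Finset.sum_pos' (fun i _ => sq_nonneg _)
        ⟨j, Finset.mem_univ j, by have := sub_ne_zero.mpr hj; positivity⟩
    linarith
end

section
/- Let G be a random matrix in ℝ^{m×n} with E[G] = ∇L and finite second moments, let ∇L = UΣVᵀ be a reduced SVD of ∇L, and assume E[G Gᵀ] is invertible. Then the function A ↦ E[‖A G − U Vᵀ‖_F^2] over A ∈ ℝ^{m×m} attains its unique minimum at A = (∇L ∇Lᵀ)^{1/2} · E[G Gᵀ]^{−1}. -/
open MeasureTheory Matrix

section

open scoped ComplexOrder

/-- The positive semidefinite square root of a positive semidefinite matrix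
(the definition `Matrix.PosSemidef.sqrt` of the older Mathlib, removed since). -/
noncomputable def Matrix.PosSemidef.sqrt {n : Type*} [Fintype n] [DecidableEq n]
    {𝕜 : Type*} [RCLike 𝕜] {A : Matrix n n 𝕜} (hA : A.PosSemidef) : Matrix n n 𝕜 :=
  hA.1.eigenvectorUnitary.1 * diagonal ((↑) ∘ (√·) ∘ hA.1.eigenvalues) *
  (star hA.1.eigenvectorUnitary : Matrix n n 𝕜)

end

open scoped MatrixOrder in
lemma statement3_sqrt_unique {m : ℕ} {A B : Matrix (Fin m) (Fin m) ℝ} (hA : A.PosSemidef)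
    (hB : B.PosSemidef) (h : B ^ 2 = A) : hA.sqrt = B := by
  have e : hA.sqrt = CFC.sqrt A := by
    rw [CFC.sqrt_eq_cfc, cfc_nnreal_eq_real _ A, hA.1.cfc_eq]
    simp only [IsHermitian.cfc, Unitary.conjStarAlgAut_apply, Matrix.PosSemidef.sqrt]
    congr 3
    funext i
    simp [Real.coe_sqrt, Real.coe_toNNReal', max_eq_left (hA.eigenvalues_nonneg i)]
  rw [e, CFC.sqrt_eq_iff _ _ hA.nonneg hB.nonneg, ← pow_two]
  exact h


lemma statement3_expand {Ω : Type*} [MeasurableSpace Ω] (μ : Measure Ω) [IsProbabilityMeasure μ]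
    {m n : ℕ} (G : Ω → Matrix (Fin m) (Fin n) ℝ)
    (gradL : Matrix (Fin m) (Fin n) ℝ)
    (hg1 : ∀ i j, Integrable (fun ω => G ω i j) μ)
    (hg2 : ∀ i j i' j', Integrable (fun ω => G ω i j * G ω i' j') μ)
    (hmean : ∀ i j, ∫ ω, G ω i j ∂μ = gradL i j)
    (EGGT : Matrix (Fin m) (Fin m) ℝ)
    (hE : ∀ p q, EGGT p q = ∑ j, ∫ ω, G ω p j * G ω q j ∂μ)
    (R : Matrix (Fin m) (Fin n) ℝ) (A : Matrix (Fin m) (Fin m) ℝ) :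
    ∫ ω, ∑ i, ∑ j, ((A * G ω - R) i j) ^ 2 ∂μ
      = Matrix.trace (A * EGGT * Aᵀ) - 2 * Matrix.trace (A * gradL * Rᵀ)
        + ∑ i, ∑ j, (R i j) ^ 2 := by
  have key : ∀ ω, (∑ i, ∑ j, ((A * G ω - R) i j) ^ 2) =
      (∑ i, ∑ j, ∑ p, ∑ q, (A i p * A i q) * (G ω p j * G ω q j))
      - 2 * (∑ i, ∑ j, ∑ p, (A i p * R i j) * G ω p j)
      + ∑ i, ∑ j, (R i j) ^ 2 := by
    intro ω
    have hpt : ∀ i j, ((A * G ω - R) i j) ^ 2 =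
        (∑ p, ∑ q, (A i p * A i q) * (G ω p j * G ω q j))
        - 2 * (∑ p, (A i p * R i j) * G ω p j) + (R i j) ^ 2 := by
      intro i j
      have h1 : (∑ p, A i p * G ω p j) * (∑ q, A i q * G ω q j)
          = ∑ p, ∑ q, (A i p * A i q) * (G ω p j * G ω q j) := by
        rw [Finset.sum_mul_sum]
        exact Finset.sum_congr rfl fun p _ => Finset.sum_congr rfl fun q _ => by ring
      have h2 : R i j * (∑ p, A i p * G ω p j) = ∑ p, (A i p * R i j) * G ω p j := by
        rw [Finset.mul_sum]
        exact Finset.sum_congr rfl fun p _ => by ring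
      simp only [Matrix.sub_apply, Matrix.mul_apply]
      rw [sub_sq]
      linear_combination h1 - 2 * h2
    simp only [hpt, Finset.sum_add_distrib, Finset.sum_sub_distrib, Finset.mul_sum]
  have int1 : Integrable (fun ω => ∑ i : Fin m, ∑ j : Fin n, ∑ p : Fin m, ∑ q : Fin m,
      (A i p * A i q) * (G ω p j * G ω q j)) μ := by
    refine integrable_finset_sum _ fun i _ => integrable_finset_sum _ fun j _ =>
      integrable_finset_sum _ fun p _ => integrable_finset_sum _ fun q _ => ?_
    exact (hg2 p j q j).const_mul _
  have int2 : Integrable (fun ω => ∑ i : Fin m, ∑ j : Fin n, ∑ p : Fin m,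
      (A i p * R i j) * G ω p j) μ := by
    refine integrable_finset_sum _ fun i _ => integrable_finset_sum _ fun j _ =>
      integrable_finset_sum _ fun p _ => ?_
    exact (hg1 p j).const_mul _
  have i1 : ∫ ω, ∑ i : Fin m, ∑ j : Fin n, ∑ p : Fin m, ∑ q : Fin m,
      (A i p * A i q) * (G ω p j * G ω q j) ∂μ = Matrix.trace (A * EGGT * Aᵀ) := by
    rw [integral_finset_sum _ fun i _ => integrable_finset_sum _ fun j _ =>
      integrable_finset_sum _ fun p _ => integrable_finset_sum _ fun q _ =>
      (hg2 p j q j).const_mul _]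
    have : ∀ i : Fin m, ∫ ω, ∑ j : Fin n, ∑ p : Fin m, ∑ q : Fin m,
        (A i p * A i q) * (G ω p j * G ω q j) ∂μ
        = ∑ p : Fin m, ∑ q : Fin m, (A i p * A i q) * EGGT p q := by
      intro i
      rw [integral_finset_sum _ fun j _ => integrable_finset_sum _ fun p _ =>
        integrable_finset_sum _ fun q _ => (hg2 p j q j).const_mul _]
      have : ∀ j : Fin n, ∫ ω, ∑ p : Fin m, ∑ q : Fin m,
          (A i p * A i q) * (G ω p j * G ω q j) ∂μ
          = ∑ p : Fin m, ∑ q : Fin m, (A i p * A i q) * ∫ ω, G ω p j * G ω q j ∂μ := by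
        intro j
        rw [integral_finset_sum _ fun p _ => integrable_finset_sum _ fun q _ =>
          (hg2 p j q j).const_mul _]
        exact Finset.sum_congr rfl fun p _ => by
          rw [integral_finset_sum _ fun q _ => (hg2 p j q j).const_mul _]
          exact Finset.sum_congr rfl fun q _ => integral_const_mul _ _
      simp only [this]
      rw [Finset.sum_comm]
      refine Finset.sum_congr rfl fun p _ => ?_
      rw [Finset.sum_comm]
      refine Finset.sum_congr rfl fun q _ => ?_
      rw [hE p q, Finset.mul_sum]
    simp only [this]
    simp only [Matrix.trace, Matrix.diag, Matrix.mul_apply, Matrix.transpose_apply,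
      Finset.sum_mul, Finset.mul_sum]
    refine Finset.sum_congr rfl fun i _ => ?_
    rw [Finset.sum_comm]
    refine Finset.sum_congr rfl fun p _ => Finset.sum_congr rfl fun q _ => by ring
  have i2 : ∫ ω, ∑ i : Fin m, ∑ j : Fin n, ∑ p : Fin m,
      (A i p * R i j) * G ω p j ∂μ = Matrix.trace (A * gradL * Rᵀ) := by
    rw [integral_finset_sum _ fun i _ => integrable_finset_sum _ fun j _ =>
      integrable_finset_sum _ fun p _ => (hg1 p j).const_mul _]
    have : ∀ i : Fin m, ∫ ω, ∑ j : Fin n, ∑ p : Fin m, (A i p * R i j) * G ω p j ∂μ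
        = ∑ j : Fin n, ∑ p : Fin m, (A i p * R i j) * gradL p j := by
      intro i
      rw [integral_finset_sum _ fun j _ => integrable_finset_sum _ fun p _ =>
        (hg1 p j).const_mul _]
      refine Finset.sum_congr rfl fun j _ => ?_
      rw [integral_finset_sum _ fun p _ => (hg1 p j).const_mul _]
      exact Finset.sum_congr rfl fun p _ => by rw [integral_const_mul, hmean p j]
    simp only [this]
    simp only [Matrix.trace, Matrix.diag, Matrix.mul_apply, Matrix.transpose_apply,
      Finset.sum_mul, Finset.mul_sum]
    refine Finset.sum_congr rfl fun i _ => ?_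
    refine Finset.sum_congr rfl fun j _ => Finset.sum_congr rfl fun p _ => by ring
  calc ∫ ω, ∑ i, ∑ j, ((A * G ω - R) i j) ^ 2 ∂μ
      = ∫ ω, ((∑ i, ∑ j, ∑ p, ∑ q, (A i p * A i q) * (G ω p j * G ω q j))
        - 2 * (∑ i, ∑ j, ∑ p, (A i p * R i j) * G ω p j)
        + ∑ i, ∑ j, (R i j) ^ 2) ∂μ := by
        exact integral_congr_ae (Filter.Eventually.of_forall key)
    _ = Matrix.trace (A * EGGT * Aᵀ) - 2 * Matrix.trace (A * gradL * Rᵀ)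
        + ∑ i, ∑ j, (R i j) ^ 2 := by
        have intsub : Integrable (fun ω => (∑ i : Fin m, ∑ j : Fin n, ∑ p : Fin m, ∑ q : Fin m,
            (A i p * A i q) * (G ω p j * G ω q j))
            - 2 * (∑ i : Fin m, ∑ j : Fin n, ∑ p : Fin m, (A i p * R i j) * G ω p j)) μ :=
          int1.sub (int2.const_mul 2)
        rw [integral_add intsub (integrable_const _),
          integral_sub int1 (int2.const_mul 2), integral_const, probReal_univ,
          one_smul, i1, integral_const_mul, i2]

/-- **Optimal left adaptation matrix towards the polar factor (one-sided, `B = I`).**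
Let `G` be a random `m × n` matrix with `E[G] = ∇L` and finite second moments, let
`∇L = U Σ Vᵀ` be a reduced SVD of `∇L`, and assume `E[G Gᵀ]` is invertible.  Then
`A ↦ E[‖A G − U Vᵀ‖_F²]` attains its unique minimum at
`A = (∇L ∇Lᵀ)^{1/2} · E[G Gᵀ]⁻¹`. -/
theorem statement3 {Ω : Type*} [MeasurableSpace Ω] (μ : Measure Ω) [IsProbabilityMeasure μ]
    {m n k : ℕ} (G : Ω → Matrix (Fin m) (Fin n) ℝ)
    (gradL : Matrix (Fin m) (Fin n) ℝ)
    (hg1 : ∀ i j, Integrable (fun ω => G ω i j) μ)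
    (hg2 : ∀ i j i' j', Integrable (fun ω => G ω i j * G ω i' j') μ)
    (hmean : ∀ i j, ∫ ω, G ω i j ∂μ = gradL i j)
    (U : Matrix (Fin m) (Fin k) ℝ) (S : Matrix (Fin k) (Fin k) ℝ)
    (V : Matrix (Fin n) (Fin k) ℝ)
    (hU : Uᵀ * U = 1) (hV : Vᵀ * V = 1)
    (hSdiag : ∀ i j, i ≠ j → S i j = 0) (hSpos : ∀ i, 0 < S i i)
    (hSVD : gradL = U * S * Vᵀ)
    (EGGT : Matrix (Fin m) (Fin m) ℝ)
    (hEGGT : ∀ i i', EGGT i i' = ∫ ω, (G ω * (G ω)ᵀ) i i' ∂μ)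
    (hinv : IsUnit EGGT.det)
    (hP : (gradL * gradLᵀ).PosSemidef)
    (Astar : Matrix (Fin m) (Fin m) ℝ)
    (hAstar : Astar = hP.sqrt * EGGT⁻¹) :
    (∀ A : Matrix (Fin m) (Fin m) ℝ,
        ∫ ω, ∑ i, ∑ j, ((Astar * G ω - U * Vᵀ) i j) ^ 2 ∂μ ≤
          ∫ ω, ∑ i, ∑ j, ((A * G ω - U * Vᵀ) i j) ^ 2 ∂μ) ∧
    (∀ A : Matrix (Fin m) (Fin m) ℝ, A ≠ Astar →
        ∫ ω, ∑ i, ∑ j, ((Astar * G ω - U * Vᵀ) i j) ^ 2 ∂μ <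
          ∫ ω, ∑ i, ∑ j, ((A * G ω - U * Vᵀ) i j) ^ 2 ∂μ) := by
  have hE : ∀ p q, EGGT p q = ∑ j, ∫ ω, G ω p j * G ω q j ∂μ := by
    intro p q
    rw [hEGGT]
    have : (fun ω => (G ω * (G ω)ᵀ) p q) = fun ω => ∑ j, G ω p j * G ω q j := by
      funext ω; simp [Matrix.mul_apply]
    rw [this, integral_finset_sum _ fun j _ => hg2 p j q j]
  have hSsymm : Sᵀ = S := by
    ext i j
    by_cases h : i = j
    · subst h; rfl
    · rw [Matrix.transpose_apply, hSdiag _ _ (Ne.symm h), hSdiag _ _ h]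
  have hUSU : (U * S * Uᵀ).PosSemidef := by
    have hSd : S = Matrix.diagonal (fun i => S i i) := by
      ext i j
      by_cases h : i = j
      · subst h; simp
      · rw [hSdiag _ _ h, Matrix.diagonal_apply_ne _ h]
    have hSpsd : S.PosSemidef := by
      rw [hSd]; exact Matrix.PosSemidef.diagonal fun i => (hSpos i).le
    have := hSpsd.mul_mul_conjTranspose_same U
    rwa [Matrix.conjTranspose_eq_transpose_of_trivial] at this
  have hsq : (U * S * Uᵀ) ^ 2 = gradL * gradLᵀ := by
    rw [pow_two, hSVD]
    have h1 : U * S * Uᵀ * (U * S * Uᵀ) = U * (S * ((Uᵀ * U) * (S * Uᵀ))) := by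
      simp only [Matrix.mul_assoc]
    have h2 : U * S * Vᵀ * (U * S * Vᵀ)ᵀ = U * (S * ((Vᵀ * V) * (Sᵀ * Uᵀ))) := by
      rw [Matrix.transpose_mul, Matrix.transpose_mul, Matrix.transpose_transpose]
      simp only [Matrix.mul_assoc]
    rw [h1, h2, hU, hV, hSsymm, Matrix.one_mul]
  have hsqrt : hP.sqrt = U * S * Uᵀ := statement3_sqrt_unique hP hUSU hsq
  have hAE : Astar * EGGT = U * S * Uᵀ := by
    rw [hAstar, Matrix.mul_assoc, Matrix.nonsing_inv_mul EGGT hinv, Matrix.mul_one, hsqrt]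
  have hEsymm : EGGTᵀ = EGGT := by
    ext p q
    rw [Matrix.transpose_apply, hE, hE]
    exact Finset.sum_congr rfl fun j _ =>
      integral_congr_ae (Filter.Eventually.of_forall fun ω => mul_comm _ _)
  have hK : gradL * (U * Vᵀ)ᵀ = U * S * Uᵀ := by
    rw [hSVD, Matrix.transpose_mul, Matrix.transpose_transpose]
    simp only [Matrix.mul_assoc]
    rw [← Matrix.mul_assoc Vᵀ V Uᵀ, hV, Matrix.one_mul]
  have hEA : EGGT * Astarᵀ = gradL * (U * Vᵀ)ᵀ := by
    have h := congrArg Matrix.transpose hAE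
    rw [Matrix.transpose_mul, hEsymm] at h
    rw [h, hK, Matrix.transpose_mul, Matrix.transpose_mul, Matrix.transpose_transpose,
      hSsymm, Matrix.mul_assoc]
  have hEpsd : EGGT.PosSemidef := by
    rw [Matrix.posSemidef_iff_dotProduct_mulVec]
    constructor
    · rw [Matrix.IsHermitian, Matrix.conjTranspose_eq_transpose_of_trivial, hEsymm]
    · intro x
      have hint : ∀ j : Fin n, Integrable (fun ω => ∑ p : Fin m, ∑ q : Fin m,
          (x p * x q) * (G ω p j * G ω q j)) μ := fun j =>
        integrable_finset_sum _ fun p _ => integrable_finset_sum _ fun q _ =>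
          (hg2 p j q j).const_mul _
      have hq : star x ⬝ᵥ EGGT *ᵥ x
          = ∫ ω, ∑ j : Fin n, (∑ p : Fin m, x p * G ω p j) ^ 2 ∂μ := by
        have hgi : (fun ω => ∑ j : Fin n, (∑ p : Fin m, x p * G ω p j) ^ 2)
            = fun ω => ∑ j : Fin n, ∑ p : Fin m, ∑ q : Fin m,
              (x p * x q) * (G ω p j * G ω q j) := by
          funext ω
          refine Finset.sum_congr rfl fun j _ => ?_
          rw [sq, Finset.sum_mul_sum]
          exact Finset.sum_congr rfl fun p _ => Finset.sum_congr rfl fun q _ => by ring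
        rw [hgi, integral_finset_sum _ fun j _ => hint j]
        have : ∀ j : Fin n, ∫ ω, ∑ p : Fin m, ∑ q : Fin m,
            (x p * x q) * (G ω p j * G ω q j) ∂μ
            = ∑ p : Fin m, ∑ q : Fin m, (x p * x q) * ∫ ω, G ω p j * G ω q j ∂μ := by
          intro j
          rw [integral_finset_sum _ fun p _ => integrable_finset_sum _ fun q _ =>
            (hg2 p j q j).const_mul _]
          exact Finset.sum_congr rfl fun p _ => by
            rw [integral_finset_sum _ fun q _ => (hg2 p j q j).const_mul _]
            exact Finset.sum_congr rfl fun q _ => integral_const_mul _ _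
        simp only [this]
        rw [Finset.sum_comm]
        simp only [star_trivial, dotProduct, Matrix.mulVec, Finset.mul_sum]
        refine Finset.sum_congr rfl fun p _ => ?_
        rw [Finset.sum_comm]
        refine Finset.sum_congr rfl fun q _ => ?_
        rw [hE p q]
        simp only [Finset.sum_mul, Finset.mul_sum]
        exact Finset.sum_congr rfl fun j _ => by ring
      rw [hq]
      exact integral_nonneg fun ω => Finset.sum_nonneg fun j _ => sq_nonneg _
  have hEpd : EGGT.PosDef := by
    refine Matrix.PosDef.of_dotProduct_mulVec_pos hEpsd.1 fun x hx =>
      lt_of_le_of_ne (hEpsd.dotProduct_mulVec_nonneg x) fun h0 => hx ?_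
    have hmv : EGGT *ᵥ x = 0 := (hEpsd.dotProduct_mulVec_zero_iff x).mp h0.symm
    have hx1 : x = (EGGT⁻¹ * EGGT) *ᵥ x := by
      rw [Matrix.nonsing_inv_mul EGGT hinv, Matrix.one_mulVec]
    rw [hx1, ← Matrix.mulVec_mulVec, hmv, Matrix.mulVec_zero]
  have hdiff : ∀ A : Matrix (Fin m) (Fin m) ℝ,
      ∫ ω, ∑ i, ∑ j, ((A * G ω - U * Vᵀ) i j) ^ 2 ∂μ
        = (∫ ω, ∑ i, ∑ j, ((Astar * G ω - U * Vᵀ) i j) ^ 2 ∂μ)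
          + ∑ i, (A - Astar) i ⬝ᵥ EGGT *ᵥ (A - Astar) i := by
    intro A
    rw [statement3_expand μ G gradL hg1 hg2 hmean EGGT hE (U * Vᵀ) A,
      statement3_expand μ G gradL hg1 hg2 hmean EGGT hE (U * Vᵀ) Astar]
    have tsum : ∑ i, (A - Astar) i ⬝ᵥ EGGT *ᵥ (A - Astar) i
        = Matrix.trace ((A - Astar) * EGGT * (A - Astar)ᵀ) := by
      simp only [Matrix.trace, Matrix.diag, Matrix.mul_apply, Matrix.transpose_apply,
        dotProduct, Matrix.mulVec, Finset.sum_mul, Finset.mul_sum]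
      refine Finset.sum_congr rfl fun i _ => ?_
      rw [Finset.sum_comm]
      exact Finset.sum_congr rfl fun p _ => Finset.sum_congr rfl fun q _ => by ring
    rw [tsum]
    have e1 : Matrix.trace (A * EGGT * Astarᵀ) = Matrix.trace (A * gradL * (U * Vᵀ)ᵀ) := by
      rw [Matrix.mul_assoc, hEA, ← Matrix.mul_assoc]
    have e2 : Matrix.trace (Astar * EGGT * Aᵀ) = Matrix.trace (A * gradL * (U * Vᵀ)ᵀ) := by
      rw [← Matrix.trace_transpose (Astar * EGGT * Aᵀ), Matrix.transpose_mul,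
        Matrix.transpose_transpose, Matrix.transpose_mul, hEsymm, hEA,
        ← Matrix.mul_assoc]
    have e3 : Matrix.trace (Astar * EGGT * Astarᵀ)
        = Matrix.trace (Astar * gradL * (U * Vᵀ)ᵀ) := by
      rw [Matrix.mul_assoc, hEA, ← Matrix.mul_assoc]
    simp only [Matrix.transpose_sub, Matrix.sub_mul, Matrix.mul_sub, Matrix.trace_sub]
    linarith [e1, e2, e3]
  constructor
  · intro A
    rw [hdiff A]
    have h0 : 0 ≤ ∑ i, (A - Astar) i ⬝ᵥ EGGT *ᵥ (A - Astar) i :=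
      Finset.sum_nonneg fun i _ => by simpa using hEpsd.dotProduct_mulVec_nonneg ((A - Astar) i)
    linarith
  · intro A hA
    rw [hdiff A]
    have hD : A - Astar ≠ 0 := sub_ne_zero.mpr hA
    obtain ⟨i, hi⟩ : ∃ i, (A - Astar) i ≠ 0 := by
      by_contra h
      push_neg at h
      exact hD (funext h)
    have h0 : 0 < ∑ i, (A - Astar) i ⬝ᵥ EGGT *ᵥ (A - Astar) i := by
      refine Finset.sum_pos' (fun i _ => by simpa using hEpsd.dotProduct_mulVec_nonneg ((A - Astar) i))
        ⟨i, Finset.mem_univ i, ?_⟩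
      simpa using hEpd.dotProduct_mulVec_pos hi
    linarith
end

section
/- Fix G ∈ ℝ^{m×n} with reduced SVD G = UΣVᵀ (U ∈ ℝ^{m×k}, V ∈ ℝ^{n×k}, Σ ∈ ℝ^{k×k}), a constant c > 0, and β ∈ (0, 1). Define L_0 = c·I_m, R_0 = c·I_n, and for t ≥ 1: L_t = β L_{t−1} + (1 − β) G R_{t−1}^{−1} Gᵀ and R_t = β R_{t−1} + (1 − β) Gᵀ L_{t−1}^{−1} G. Then for every t ≥ 0 there exists a diagonal matrix D_t ∈ ℝ^{k×k} with strictly positive diagonal entries such that L_t = U D_t Uᵀ + c β^t (I_m − U Uᵀ) and R_t = V D_t Vᵀ + c β^t (I_n − V Vᵀ), where D_0 = c·I_k and D_t = β D_{t−1} + (1 − β) Σ D_{t−1}^{−1} Σ; in particular the iteration decouples into k independent scalar iterations on the singular values. -/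
open Matrix

/-- The coupled KL-Shampoo factor-matrix iteration for a fixed gradient `G`:
`L_0 = c I`, `R_0 = c I`,
`L_{t+1} = β L_t + (1 − β) G R_t⁻¹ Gᵀ`, `R_{t+1} = β R_t + (1 − β) Gᵀ L_t⁻¹ G`. -/
noncomputable def klIter {m n : ℕ} (G : Matrix (Fin m) (Fin n) ℝ) (c β : ℝ) :
    ℕ → Matrix (Fin m) (Fin m) ℝ × Matrix (Fin n) (Fin n) ℝ
  | 0 => (c • (1 : Matrix (Fin m) (Fin m) ℝ), c • (1 : Matrix (Fin n) (Fin n) ℝ))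
  | t + 1 =>
      let p := klIter G c β t
      (β • p.1 + (1 - β) • (G * p.2⁻¹ * Gᵀ), β • p.2 + (1 - β) • (Gᵀ * p.1⁻¹ * G))

/-- The decoupled `k × k` iteration on the singular values:
`D_0 = c I`, `D_{t+1} = β D_t + (1 − β) Σ D_t⁻¹ Σ`. -/
noncomputable def dIter {k : ℕ} (S : Matrix (Fin k) (Fin k) ℝ) (c β : ℝ) :
    ℕ → Matrix (Fin k) (Fin k) ℝ
  | 0 => c • (1 : Matrix (Fin k) (Fin k) ℝ)
  | t + 1 => β • dIter S c β t + (1 - β) • (S * (dIter S c β t)⁻¹ * S)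

section helpers
variable {n k : ℕ} (V : Matrix (Fin n) (Fin k) ℝ)

lemma sandwich_proj_right (hV : Vᵀ * V = 1) (A : Matrix (Fin k) (Fin k) ℝ) :
    (V * A * Vᵀ) * (1 - V * Vᵀ) = 0 := by
  rw [Matrix.mul_sub, Matrix.mul_one]
  simp only [Matrix.mul_assoc]
  rw [← Matrix.mul_assoc Vᵀ V, hV, Matrix.one_mul, sub_self]

lemma sandwich_proj_left (hV : Vᵀ * V = 1) (A : Matrix (Fin k) (Fin k) ℝ) :
    (1 - V * Vᵀ) * (V * A * Vᵀ) = 0 := by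
  rw [Matrix.sub_mul, Matrix.one_mul]
  simp only [Matrix.mul_assoc]
  rw [← Matrix.mul_assoc Vᵀ V, hV, Matrix.one_mul, sub_self]

lemma proj_sq (hV : Vᵀ * V = 1) : (1 - V * Vᵀ) * (1 - V * Vᵀ) = 1 - V * Vᵀ := by
  rw [Matrix.sub_mul, Matrix.one_mul, Matrix.mul_sub, Matrix.mul_one]
  simp only [Matrix.mul_assoc]
  rw [← Matrix.mul_assoc Vᵀ V, hV, Matrix.one_mul]
  abel

lemma diag_inv (d : Fin k → ℝ) (hd : ∀ i, d i ≠ 0) :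
    (diagonal d)⁻¹ = diagonal (fun i => (d i)⁻¹) := by
  apply Matrix.inv_eq_right_inv
  rw [diagonal_mul_diagonal]
  have : (fun i => d i * (d i)⁻¹) = fun _ => (1:ℝ) := funext fun i => mul_inv_cancel₀ (hd i)
  rw [this, diagonal_one]

lemma spectral_inv (hV : Vᵀ * V = 1) (d : Fin k → ℝ) (hd : ∀ i, d i ≠ 0)
    (a : ℝ) (ha : a ≠ 0) :
    (V * diagonal d * Vᵀ + a • (1 - V * Vᵀ))⁻¹
      = V * diagonal (fun i => (d i)⁻¹) * Vᵀ + a⁻¹ • (1 - V * Vᵀ) := by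
  apply Matrix.inv_eq_right_inv
  have hDD : diagonal d * diagonal (fun i => (d i)⁻¹) = (1 : Matrix (Fin k) (Fin k) ℝ) := by
    rw [diagonal_mul_diagonal]
    have : (fun i => d i * (d i)⁻¹) = fun _ => (1:ℝ) := funext fun i => mul_inv_cancel₀ (hd i)
    rw [this, diagonal_one]
  have hsand : (V * diagonal d * Vᵀ) * (V * diagonal (fun i => (d i)⁻¹) * Vᵀ)
      = V * Vᵀ := by
    simp only [Matrix.mul_assoc]
    rw [← Matrix.mul_assoc Vᵀ V, hV, Matrix.one_mul,
      ← Matrix.mul_assoc (diagonal d), hDD, Matrix.one_mul]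
  rw [Matrix.add_mul, Matrix.mul_add, Matrix.mul_add, Matrix.smul_mul, Matrix.smul_mul,
    Matrix.mul_smul, Matrix.mul_smul, hsand,
    sandwich_proj_right V hV, sandwich_proj_left V hV, proj_sq V hV,
    smul_zero, smul_zero, smul_smul, mul_inv_cancel₀ ha, one_smul,
    add_zero, zero_add]
  abel

end helpers

/-- **The KL-Shampoo iteration decouples along the SVD of the gradient.**
Fix `G ∈ ℝ^{m×n}` with reduced SVD `G = U Σ Vᵀ`, `c > 0` and `β ∈ (0,1)`.  Then for every
`t ≥ 0` there is a diagonal matrix `D_t` with strictly positive diagonal entries (given by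
`D_0 = c I`, `D_{t+1} = β D_t + (1 − β) Σ D_t⁻¹ Σ`) such that
`L_t = U D_t Uᵀ + c β^t (I_m − U Uᵀ)` and `R_t = V D_t Vᵀ + c β^t (I_n − V Vᵀ)`;
in particular the iteration decouples into `k` independent scalar iterations on the
singular values. -/
theorem statement12 {m n k : ℕ}
    (G : Matrix (Fin m) (Fin n) ℝ)
    (U : Matrix (Fin m) (Fin k) ℝ) (S : Matrix (Fin k) (Fin k) ℝ)
    (V : Matrix (Fin n) (Fin k) ℝ)
    (hU : Uᵀ * U = 1) (hV : Vᵀ * V = 1)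
    (hSdiag : ∀ i j, i ≠ j → S i j = 0) (hSpos : ∀ i, 0 < S i i)
    (hSVD : G = U * S * Vᵀ)
    (c β : ℝ) (hc : 0 < c) (hβ0 : 0 < β) (hβ1 : β < 1) :
    ∀ t : ℕ,
      (∀ i j, i ≠ j → dIter S c β t i j = 0) ∧
      (∀ i, 0 < dIter S c β t i i) ∧
      (klIter G c β t).1 = U * dIter S c β t * Uᵀ + (c * β ^ t) • (1 - U * Uᵀ) ∧
      (klIter G c β t).2 = V * dIter S c β t * Vᵀ + (c * β ^ t) • (1 - V * Vᵀ) := by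
  have hs : S = diagonal (fun i => S i i) := by
    ext i j
    rcases eq_or_ne i j with rfl | hij
    · simp
    · simp [diagonal_apply_ne _ hij, hSdiag i j hij]
  set s : Fin k → ℝ := fun i => S i i with hs_def
  have hVV : ∀ {p : ℕ} (X : Matrix (Fin k) (Fin p) ℝ), Vᵀ * (V * X) = X := by
    intro p X; rw [← Matrix.mul_assoc, hV, Matrix.one_mul]
  have hUU : ∀ {p : ℕ} (X : Matrix (Fin k) (Fin p) ℝ), Uᵀ * (U * X) = X := by
    intro p X; rw [← Matrix.mul_assoc, hU, Matrix.one_mul]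
  intro t
  induction t with
  | zero =>
    refine ⟨?_, ?_, ?_, ?_⟩
    · intro i j hij
      simp [dIter, Matrix.smul_apply, Matrix.one_apply_ne hij]
    · intro i
      simp [dIter, Matrix.smul_apply]
      exact hc
    · show c • (1 : Matrix (Fin m) (Fin m) ℝ)
        = U * dIter S c β 0 * Uᵀ + (c * β ^ 0) • (1 - U * Uᵀ)
      simp [dIter, Matrix.mul_smul, Matrix.smul_mul, smul_sub]
    · show c • (1 : Matrix (Fin n) (Fin n) ℝ)
        = V * dIter S c β 0 * Vᵀ + (c * β ^ 0) • (1 - V * Vᵀ)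
      simp [dIter, Matrix.mul_smul, Matrix.smul_mul, smul_sub]
  | succ t ih =>
    obtain ⟨hdiag, hpos, hL, hR⟩ := ih
    set d : Fin k → ℝ := fun i => dIter S c β t i i with hd_def
    have hD : dIter S c β t = diagonal d := by
      ext i j
      rcases eq_or_ne i j with rfl | hij
      · simp [hd_def]
      · simp [diagonal_apply_ne _ hij, hdiag i j hij]
    have hd0 : ∀ i, d i ≠ 0 := fun i => (hpos i).ne'
    have ha0 : (c * β ^ t) ≠ 0 := by positivity
    have hDinv : (dIter S c β t)⁻¹ = diagonal (fun i => (d i)⁻¹) := by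
      rw [hD, diag_inv _ hd0]
    -- the new diagonal matrix
    have hstep : dIter S c β (t + 1)
        = diagonal (fun i => β * d i + (1 - β) * (s i * (d i)⁻¹ * s i)) := by
      show β • dIter S c β t + (1 - β) • (S * (dIter S c β t)⁻¹ * S) = _
      rw [hDinv, hD, hs, diagonal_mul_diagonal, diagonal_mul_diagonal]
      ext i j
      rcases eq_or_ne i j with rfl | hij
      · simp [mul_comm, mul_assoc, mul_left_comm]
      · simp [diagonal_apply_ne _ hij]
    have hdiag' : ∀ i j, i ≠ j → dIter S c β (t+1) i j = 0 := by
      intro i j hij; rw [hstep]; exact diagonal_apply_ne _ hij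
    have hpos' : ∀ i, 0 < dIter S c β (t+1) i i := by
      intro i
      rw [hstep, diagonal_apply_eq]
      have h1 := hpos i
      have h2 := hSpos i
      have h3 : (0:ℝ) < 1 - β := by linarith
      have : (0:ℝ) < s i := h2
      positivity
    have hGRG : G * ((klIter G c β t).2)⁻¹ * Gᵀ
        = U * (S * (dIter S c β t)⁻¹ * S) * Uᵀ := by
      rw [hR, hDinv, hD, spectral_inv V hV d hd0 _ ha0]
      rw [hSVD, hs]
      simp only [transpose_mul, transpose_transpose, diagonal_transpose]
      simp only [Matrix.mul_add, Matrix.add_mul, Matrix.mul_sub, Matrix.sub_mul,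
        Matrix.one_mul, Matrix.mul_one, Matrix.mul_smul, Matrix.smul_mul,
        Matrix.mul_assoc, hVV]
      simp [sub_self]
    have hGLG : Gᵀ * ((klIter G c β t).1)⁻¹ * G
        = V * (S * (dIter S c β t)⁻¹ * S) * Vᵀ := by
      rw [hL, hDinv, hD, spectral_inv U hU d hd0 _ ha0]
      rw [hSVD, hs]
      simp only [transpose_mul, transpose_transpose, diagonal_transpose]
      simp only [Matrix.mul_add, Matrix.add_mul, Matrix.mul_sub, Matrix.sub_mul,
        Matrix.one_mul, Matrix.mul_one, Matrix.mul_smul, Matrix.smul_mul,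
        Matrix.mul_assoc, hUU]
      simp [sub_self]
    refine ⟨hdiag', hpos', ?_, ?_⟩
    · show β • (klIter G c β t).1 + (1 - β) • (G * ((klIter G c β t).2)⁻¹ * Gᵀ)
        = U * dIter S c β (t+1) * Uᵀ + (c * β ^ (t+1)) • (1 - U * Uᵀ)
      rw [hGRG, hL]
      have : dIter S c β (t+1)
          = β • dIter S c β t + (1 - β) • (S * (dIter S c β t)⁻¹ * S) := rfl
      rw [this]
      rw [Matrix.mul_add, Matrix.add_mul, Matrix.mul_smul, Matrix.mul_smul,
        Matrix.smul_mul, Matrix.smul_mul, smul_add, smul_smul]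
      ring_nf
      abel
    · show β • (klIter G c β t).2 + (1 - β) • (Gᵀ * ((klIter G c β t).1)⁻¹ * G)
        = V * dIter S c β (t+1) * Vᵀ + (c * β ^ (t+1)) • (1 - V * Vᵀ)
      rw [hGLG, hR]
      have : dIter S c β (t+1)
          = β • dIter S c β t + (1 - β) • (S * (dIter S c β t)⁻¹ * S) := rfl
      rw [this]
      rw [Matrix.mul_add, Matrix.add_mul, Matrix.mul_smul, Matrix.mul_smul,
        Matrix.smul_mul, Matrix.smul_mul, smul_add, smul_smul]
      ring_nf
      abel
end
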